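/- In the torus J = C³/Λ, the fixed locus of the order-4 element h₄ : (z₁,z₂,z₃) ↦ (z₁,−z₃,z₂) is connected and equals the image of the first coordinate axis; equivalently, every z ∈ C³ with (0, z₂+z₃, z₃−z₂) ∈ Λ lies in C·(1,0,0) + Λ. -/

import Mathlib

noncomputable section

def Kalpha : ℂ := (1 + Complex.I * Real.sqrt 7) / 2
def Kalphabar : ℂ := (1 - Complex.I * Real.sqrt 7) / 2

def Ke1 : Fin 3 → ℂ := ![0, Kalpha, Kalpha]
def Ke2 : Fin 3 → ℂ := ![0, 0, 2]
def Ke3 : Fin 3 → ℂ := ![1, 1, Kalphabar]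

def LambdaZ : Submodule ℤ (Fin 3 → ℂ) :=
  Submodule.span ℤ {Ke1, Ke2, Ke3, Kalpha • Ke1, Kalpha • Ke2, Kalpha • Ke3}

/-!
`Λ` is the `ℤ[α]`-span of `Ke1`, `Ke2`, `Ke3`: the `ℤ`-span of the six generators is stable under
multiplication by `α` because `α² = α - 2`. So the elements of `Λ` are the
`a Ke1 + b Ke2 + c Ke3 = (c, aα + c, aα + 2b + cᾱ)` with `a, b, c ∈ ℤ[α]`, and `h₄` maps `Λ` to
itself. As `z ↦ z - h₄ z = (0, z₂ + z₃, z₃ - z₂)` vanishes on the first axis, `z ∈ ℂ·(1,0,0) + Λ`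
gives `z - h₄ z ∈ Λ`. Conversely, if `z - h₄ z = a Ke1 + b Ke2 + c Ke3`, then `c = 0`, `z₂ = -b` and
`z₃ = aα + b`, and these are the last two coordinates of `(a - b) Ke1 + a Ke2 - (b + (a - b)α) Ke3`.
-/

lemma Kalpha_sq : Kalpha ^ 2 = Kalpha - 2 := by
  have h7 : (Real.sqrt 7 : ℂ) ^ 2 = 7 := by
    rw [← Complex.ofReal_pow, Real.sq_sqrt (by norm_num)]; norm_num
  unfold Kalpha
  linear_combination (Complex.I ^ 2 / 4) * h7 + (7 / 4 : ℂ) * Complex.I_sq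

lemma Kalphabar_eq : Kalphabar = 1 - Kalpha := by
  unfold Kalpha Kalphabar; ring

def Zalpha : Subring ℂ := Subring.closure {Kalpha}

def alphaZ : Zalpha := ⟨Kalpha, Subring.subset_closure rfl⟩

@[simp] lemma coe_alphaZ : (alphaZ : ℂ) = Kalpha := rfl

lemma mem_LambdaZ_of_mem_generators {w : Fin 3 → ℂ}
    (hw : w ∈ ({Ke1, Ke2, Ke3, Kalpha • Ke1, Kalpha • Ke2, Kalpha • Ke3} : Set (Fin 3 → ℂ))) :
    w ∈ LambdaZ :=
  Submodule.subset_span hw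

lemma Kalpha_smul_mem_LambdaZ {v : Fin 3 → ℂ} (hv : v ∈ LambdaZ) : Kalpha • v ∈ LambdaZ := by
  have Kalpha_smul_smul (w : Fin 3 → ℂ) : Kalpha • Kalpha • w = Kalpha • w - (2 : ℤ) • w := by
    linear_combination (norm := module) Kalpha_sq • w
  induction hv using Submodule.span_induction with
  | mem w hw =>
    rcases hw with rfl | rfl | rfl | rfl | rfl | rfl
    iterate 3 exact mem_LambdaZ_of_mem_generators (by simp)
    all_goals
      rw [Kalpha_smul_smul]
      exact sub_mem (mem_LambdaZ_of_mem_generators (by simp))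
        (zsmul_mem (mem_LambdaZ_of_mem_generators (by simp)) 2)
  | zero => simp
  | add u w _ _ hu hw => rw [smul_add]; exact add_mem hu hw
  | smul n w _ hw => rw [smul_comm]; exact zsmul_mem hw n

lemma smul_mem_LambdaZ {r : ℂ} (hr : r ∈ Zalpha) {v : Fin 3 → ℂ} (hv : v ∈ LambdaZ) :
    r • v ∈ LambdaZ := by
  induction hr using Subring.closure_induction generalizing v with
  | mem r hr => rw [Set.mem_singleton_iff.mp hr]; exact Kalpha_smul_mem_LambdaZ hv
  | zero => simp
  | one => simpa using hv
  | add r s _ _ hr hs => rw [add_smul]; exact add_mem (hr hv) (hs hv)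
  | neg r _ hr => rw [neg_smul]; exact neg_mem (hr hv)
  | mul r s _ _ hr hs => rw [mul_smul]; exact hr (hs hv)

lemma mem_LambdaZ_iff {v : Fin 3 → ℂ} :
    v ∈ LambdaZ ↔ ∃ a b c : Zalpha, v = (a : ℂ) • Ke1 + (b : ℂ) • Ke2 + (c : ℂ) • Ke3 := by
  constructor
  · intro hv
    induction hv using Submodule.span_induction with
    | mem w hw =>
      rcases hw with rfl | rfl | rfl | rfl | rfl | rfl
      exacts [⟨1, 0, 0, by simp⟩, ⟨0, 1, 0, by simp⟩, ⟨0, 0, 1, by simp⟩,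
        ⟨alphaZ, 0, 0, by simp⟩, ⟨0, alphaZ, 0, by simp⟩, ⟨0, 0, alphaZ, by simp⟩]
    | zero => exact ⟨0, 0, 0, by simp⟩
    | add u w _ _ hu hw =>
      obtain ⟨a, b, c, rfl⟩ := hu
      obtain ⟨a', b', c', rfl⟩ := hw
      exact ⟨a + a', b + b', c + c', by push_cast; module⟩
    | smul n w _ hw =>
      obtain ⟨a, b, c, rfl⟩ := hw
      exact ⟨n * a, n * b, n * c, by push_cast; module⟩
  · rintro ⟨a, b, c, rfl⟩
    exact add_mem (add_mem (smul_mem_LambdaZ a.2 (mem_LambdaZ_of_mem_generators (by simp)))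
      (smul_mem_LambdaZ b.2 (mem_LambdaZ_of_mem_generators (by simp))))
      (smul_mem_LambdaZ c.2 (mem_LambdaZ_of_mem_generators (by simp)))

lemma smul_Ke1_add_smul_Ke2_add_smul_Ke3 (a b c : ℂ) :
    a • Ke1 + b • Ke2 + c • Ke3 = ![c, a * Kalpha + c, a * Kalpha + 2 * b + c * (1 - Kalpha)] := by
  simp only [Ke1, Ke2, Ke3, Kalphabar_eq, Matrix.smul_cons, Matrix.add_cons, Matrix.head_cons,
    Matrix.tail_cons, Matrix.smul_empty, Matrix.empty_add_empty, smul_eq_mul]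
  exact Matrix.vec3_eq (by ring) (by ring) (by ring)

def h4 (z : Fin 3 → ℂ) : Fin 3 → ℂ := ![z 0, -z 2, z 1]

lemma h4_mem_LambdaZ {v : Fin 3 → ℂ} (hv : v ∈ LambdaZ) : h4 v ∈ LambdaZ := by
  obtain ⟨a, b, c, rfl⟩ := mem_LambdaZ_iff.mp hv
  refine mem_LambdaZ_iff.mpr ⟨-a - b + (b + c) * alphaZ, a * alphaZ + b + c, c, ?_⟩
  simp only [smul_Ke1_add_smul_Ke2_add_smul_Ke3, h4, Matrix.cons_val]
  push_cast [coe_alphaZ]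
  exact Matrix.vec3_eq rfl (by linear_combination (-(b : ℂ) - c) * Kalpha_sq)
    (by linear_combination (-(b : ℂ) - c) * Kalpha_sq)

lemma sub_h4 (z : Fin 3 → ℂ) : z - h4 z = ![0, z 1 + z 2, z 2 - z 1] := by
  ext i; fin_cases i <;> simp [h4]

lemma sub_smul_single_zero (z : Fin 3 → ℂ) (x : ℂ) :
    z - x • ![1, 0, 0] = ![z 0 - x, z 1, z 2] := by
  ext i; fin_cases i <;> simp

lemma sub_h4_mem_of_sub_smul_mem {z : Fin 3 → ℂ} {x : ℂ} (h : z - x • ![1, 0, 0] ∈ LambdaZ) :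
    z - h4 z ∈ LambdaZ := by
  have sub_h4_eq : z - h4 z = (z - x • ![1, 0, 0]) - h4 (z - x • ![1, 0, 0]) := by
    simp only [sub_h4, sub_smul_single_zero, Matrix.cons_val]
  rw [sub_h4_eq]
  exact sub_mem h (h4_mem_LambdaZ h)

lemma exists_sub_smul_mem_of_sub_h4_mem {z : Fin 3 → ℂ} (h : z - h4 z ∈ LambdaZ) :
    ∃ x : ℂ, z - x • ![1, 0, 0] ∈ LambdaZ := by
  obtain ⟨a, b, c, habc⟩ := mem_LambdaZ_iff.mp h
  rw [sub_h4, smul_Ke1_add_smul_Ke2_add_smul_Ke3] at habc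
  obtain ⟨hc, h1, h2⟩ : 0 = (c : ℂ) ∧ z 1 + z 2 = a * Kalpha + c ∧
      z 2 - z 1 = a * Kalpha + 2 * b + c * (1 - Kalpha) :=
    ⟨congrFun habc 0, congrFun habc 1, congrFun habc 2⟩
  rw [← hc] at h1 h2
  refine ⟨z 0 + b + (a - b) * Kalpha, mem_LambdaZ_iff.mpr ⟨a - b, a, -b - (a - b) * alphaZ, ?_⟩⟩
  rw [sub_smul_single_zero, smul_Ke1_add_smul_Ke2_add_smul_Ke3]
  push_cast [coe_alphaZ]
  exact Matrix.vec3_eq (by ring) (by linear_combination (h1 - h2) / 2)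
    (by linear_combination (h1 + h2) / 2 - (a - b : ℂ) * Kalpha_sq)

/-- The fixed locus in `J = ℂ³/Λ` of the order-4 element
`h₄ : (z₁,z₂,z₃) ↦ (z₁,-z₃,z₂)` is connected and equals the image of the first
coordinate axis: `(0, z₂+z₃, z₃-z₂) ∈ Λ` iff `z ∈ ℂ·(1,0,0) + Λ`. -/
theorem fixed_locus_of_order_four :
    ∀ z : Fin 3 → ℂ,
      (![(0 : ℂ), z 1 + z 2, z 2 - z 1] ∈ LambdaZ) ↔
      (∃ x : ℂ, z - x • ![1,0,0] ∈ LambdaZ) := by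
  intro z
  rw [← sub_h4]
  exact ⟨exists_sub_smul_mem_of_sub_h4_mem, fun ⟨_, hx⟩ => sub_h4_mem_of_sub_smul_mem hx⟩

end
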